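/- With the DER cost C = Σ_{l=1}^k Σ_{i∈P_l} d_i·D(w_i, μ_{P_l}) and the random variables X ∼ π, Y the L-step averaged random walk from X (so P(Y=j | X=i) = w_i(j)), and Z the partition indicator (Z = s iff X ∈ P_s), one has C = −d_V·H(Y | Z), where d_V = Σ_i d_i and H denotes conditional Shannon entropy (natural log). -/
import Mathlib


/-- The DER cost C = Σ_l Σ_{i∈P_l} d_i D(w_i, μ_{P_l}) equals −d_V · H(Y|Z),
where P(Z=s) = d_{P_s}/d_V and P(Y=j|Z=s) = μ_{P_s}(j). -/
theorem stmt4 {V : Type*} [Fintype V] [DecidableEq V] [Nonempty V] (k : ℕ)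
    (d : V → ℝ) (hd : ∀ i, 0 < d i)
    (w : V → V → ℝ) (hw0 : ∀ i j, 0 < w i j) (hw1 : ∀ i, ∑ j, w i j = 1)
    (P : Fin k → Finset V) (hne : ∀ s, (P s).Nonempty)
    (hdisj : ∀ s t, s ≠ t → Disjoint (P s) (P t))
    (hcover : Finset.univ.biUnion P = Finset.univ) :
    let dV : ℝ := ∑ i, d i
    let dP : Fin k → ℝ := fun s => ∑ i ∈ P s, d i
    let μ : Fin k → V → ℝ := fun s j => (1 / dP s) * ∑ i ∈ P s, d i * w i j
    let D : (V → ℝ) → (V → ℝ) → ℝ := fun ν m => ∑ j, ν j * Real.log (m j)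
    let HYgZ : ℝ := -∑ s, (dP s / dV) * ∑ j, μ s j * Real.log (μ s j)
    (∑ s, ∑ i ∈ P s, d i * D (w i) (μ s)) = -dV * HYgZ := by
  intro dV dP μ D HYgZ
  have hdV : dV ≠ 0 := by
    have : 0 < dV := Finset.sum_pos (fun i _ => hd i) Finset.univ_nonempty
    exact ne_of_gt this
  have hdP : ∀ s, dP s ≠ 0 := fun s =>
    ne_of_gt (Finset.sum_pos (fun i _ => hd i) (hne s))
  have key : ∀ s, ∑ i ∈ P s, d i * D (w i) (μ s)
      = dP s * ∑ j, μ s j * Real.log (μ s j) := by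
    intro s
    have : ∑ i ∈ P s, d i * D (w i) (μ s)
        = ∑ j, (∑ i ∈ P s, d i * w i j) * Real.log (μ s j) := by
      simp only [D, Finset.mul_sum, Finset.sum_mul]
      rw [Finset.sum_comm]
      congr 1; ext i; congr 1; ext j; ring
    rw [this, Finset.mul_sum]
    congr 1; ext j
    have : (∑ i ∈ P s, d i * w i j) = dP s * μ s j := by
      simp only [μ]
      rw [← mul_assoc, mul_one_div, div_self (hdP s), one_mul]
    rw [this]; ring
  calc ∑ s, ∑ i ∈ P s, d i * D (w i) (μ s)
      = ∑ s, dP s * ∑ j, μ s j * Real.log (μ s j) :=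
        Finset.sum_congr rfl fun s _ => key s
    _ = -dV * HYgZ := by
        simp only [HYgZ, mul_neg, neg_mul, neg_neg, Finset.mul_sum,
          Finset.sum_neg_distrib]
        refine Finset.sum_congr rfl fun s _ => Finset.sum_congr rfl fun j _ => ?_
        field_simp
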